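/- Let B be an n × m real matrix, b ∈ R^n, A = B^T B, and 0 < μ < 2/λ_max(A). If the initial value C^{(0)} = 0, then the iteration C^{(α+1)} = (I − μA) C^{(α)} + μ B^T b converges to A⁺ B^T b, which is the solution of A X = B^T b with minimum Euclidean norm. -/

import Mathlib

open Matrix Filter Topology

/-!
Put `Y = A⁺ Bᵀ b`. Since `A = Bᵀ B`, the identity `A A⁺ A = A` gives `A A⁺ Bᵀ = Bᵀ`, so
`A Y = Bᵀ b`; hence `Y` is a fixed point of the iteration and `C k = Y - (I - μ A)ᵏ Y`.
The identities `A⁺ A A⁺ = A⁺` and `(A⁺ A)ᵀ = A⁺ A` put `Y` in the range of `A`, and in an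
orthonormal eigenbasis of `A` the matrix `(I - μ A)ᵏ A` is diagonal with entries
`λ (1 - μ λ)ᵏ`, which tend to `0` because `0 ≤ λ ≤ λ_max < 2 / μ`. Finally, every solution `X`
of `A X = Bᵀ b` satisfies `Y = A⁺ A X`, and `A⁺ A` is an orthogonal projection.
-/

theorem tendsto_mul_one_sub_mul_pow_nhds_zero {d μ : ℝ} (hd : 0 ≤ d) (hμ : 0 < μ)
    (h2 : μ * d < 2) : Tendsto (fun k : ℕ => d * (1 - μ * d) ^ k) atTop (𝓝 0) := by
  rcases hd.eq_or_lt with rfl | hd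
  · simp
  · have h : |1 - μ * d| < 1 := abs_lt.2 ⟨by linarith, by nlinarith⟩
    simpa using (tendsto_pow_atTop_nhds_zero_of_abs_lt_one h).const_mul d

namespace Matrix

variable {ι : Type*} [Fintype ι]

theorem dotProduct_mulVec_self_le {R : Type*} [CommRing R] [LinearOrder R]
    [IsStrictOrderedRing R] {P : Matrix ι ι R} (hsymm : Pᵀ = P) (hidem : P * P = P)
    (x : ι → R) : P *ᵥ x ⬝ᵥ P *ᵥ x ≤ x ⬝ᵥ x := by
  have horth : P *ᵥ x ⬝ᵥ (x - P *ᵥ x) = 0 := by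
    rw [dotProduct_sub, dotProduct_mulVec, ← mulVec_transpose, hsymm, mulVec_mulVec, hidem,
      dotProduct_comm, sub_self]
  have hsplit : x ⬝ᵥ x = P *ᵥ x ⬝ᵥ P *ᵥ x + (x - P *ᵥ x) ⬝ᵥ (x - P *ᵥ x) := by
    conv_lhs => rw [← add_sub_cancel (P *ᵥ x) x]
    rw [add_dotProduct, dotProduct_add, dotProduct_add, horth, dotProduct_comm (x - P *ᵥ x),
      horth, add_zero, zero_add]
  rw [hsplit]
  exact le_add_of_nonneg_right (Finset.sum_nonneg fun i _ => mul_self_nonneg _)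

variable [DecidableEq ι]

theorem iterate_eq_sub_pow_mulVec {R : Type*} [CommRing R] {T : Matrix ι ι R}
    {c y : ι → R} (hy : T *ᵥ y + c = y) {C : ℕ → ι → R} (hC0 : C 0 = 0)
    (hC : ∀ k, C (k + 1) = T *ᵥ C k + c) (k : ℕ) : C k = y - (T ^ k) *ᵥ y := by
  induction k with
  | zero => simp [hC0]
  | succ k ih =>
    rw [hC k, ih, mulVec_sub, mulVec_mulVec, ← pow_succ', sub_add_eq_add_sub, hy]

theorem transpose_mul_self_mul_mul_transpose_eq {κ : Type*} [Fintype κ] {B : Matrix κ ι ℝ}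
    {G : Matrix ι ι ℝ} (h : Bᵀ * B * G * (Bᵀ * B) = Bᵀ * B) : Bᵀ * B * G * Bᵀ = Bᵀ := by
  have hE : (1 - Bᵀ * B * G) * (Bᴴ * B) = 0 := by
    rw [conjTranspose_eq_transpose_of_trivial, Matrix.sub_mul, Matrix.one_mul, h, sub_self]
  rw [mul_conjTranspose_mul_self_eq_zero, Matrix.sub_mul, Matrix.one_mul, sub_eq_zero,
    conjTranspose_eq_transpose_of_trivial] at hE
  exact hE.symm

theorem IsHermitian.eigenvalues_le {A : Matrix ι ι ℝ} (hA : A.IsHermitian) {c : ℝ}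
    (h : ∀ (l : ℝ) (v : ι → ℝ), v ≠ 0 → A *ᵥ v = l • v → l ≤ c) (i : ι) :
    hA.eigenvalues i ≤ c :=
  h _ _ (by simpa using hA.eigenvectorBasis.orthonormal.ne_zero i) (hA.mulVec_eigenvectorBasis i)

theorem PosSemidef.tendsto_one_sub_smul_pow_mul_nhds_zero {A : Matrix ι ι ℝ}
    (hA : A.PosSemidef) {μ : ℝ} (hμ : 0 < μ) (h2 : ∀ i, μ * hA.1.eigenvalues i < 2) :
    Tendsto (fun k : ℕ => (1 - μ • A) ^ k * A) atTop (𝓝 0) := by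
  set d := hA.1.eigenvalues
  set φ := Unitary.conjStarAlgAut ℝ _ hA.1.eigenvectorUnitary
  have hAφ : A = φ (diagonal d) := by
    simpa only [RCLike.ofReal_real_eq_id, Function.id_comp] using hA.1.spectral_theorem
  have hdiag : ∀ k : ℕ,
      (1 - μ • A) ^ k * A = φ (diagonal fun i => d i * (1 - μ * d i) ^ k) := by
    intro k
    rw [hAφ, ← map_one φ, ← map_smul, ← map_sub, ← map_pow, ← map_mul, ← diagonal_one,
      ← diagonal_smul, diagonal_sub, diagonal_pow, diagonal_mul_diagonal]
    congr 2
    ext i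
    simp [mul_comm]
  have hφ : Continuous φ := (continuous_const.mul continuous_id).mul continuous_const
  simp only [hdiag]
  rw [← map_zero φ, ← diagonal_zero]
  refine (hφ.comp continuous_id.matrix_diagonal).continuousAt.tendsto.comp ?_
  exact tendsto_pi_nhds.2 fun i =>
    tendsto_mul_one_sub_mul_pow_nhds_zero (hA.eigenvalues_nonneg i) hμ (h2 i)

end Matrix

theorem ipia_converges_to_min_norm_solution_general
    (n m : ℕ) (B : Matrix (Fin n) (Fin m) ℝ) (b : Fin n → ℝ)
    (A Ap : Matrix (Fin m) (Fin m) ℝ) (hAdef : A = Bᵀ * B)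
    (hp1 : A * Ap * A = A) (hp2 : Ap * A * Ap = Ap)
    (hp4 : (Ap * A)ᵀ = Ap * A)
    (μ lmax : ℝ) (hlmax_pos : 0 < lmax)
    (hmax : ∀ (l : ℝ) (v : Fin m → ℝ), v ≠ 0 → A.mulVec v = l • v → l ≤ lmax)
    (hμ0 : 0 < μ) (hμ2 : μ < 2 / lmax)
    (C : ℕ → (Fin m → ℝ)) (hC0 : C 0 = 0)
    (hC : ∀ α : ℕ, C (α + 1) = (1 - μ • A).mulVec (C α) + μ • Bᵀ.mulVec b) :
    Filter.Tendsto C Filter.atTop (nhds (Ap.mulVec (Bᵀ.mulVec b))) ∧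
    A.mulVec (Ap.mulVec (Bᵀ.mulVec b)) = Bᵀ.mulVec b ∧
    (∀ X : Fin m → ℝ, A.mulVec X = Bᵀ.mulVec b →
      Real.sqrt (∑ i, (Ap.mulVec (Bᵀ.mulVec b)) i ^ 2) ≤ Real.sqrt (∑ i, X i ^ 2)) := by
  set w := Bᵀ *ᵥ b with hw
  set Y := Ap *ᵥ w with hY
  clear_value w Y
  have hA : A.PosSemidef := by simpa [hAdef] using posSemidef_conjTranspose_mul_self B
  have hAsymm : Aᵀ = A := by rw [hAdef, transpose_mul, transpose_transpose]
  have hsol : A *ᵥ Y = w := by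
    subst hAdef
    rw [hY, hw, mulVec_mulVec, mulVec_mulVec, transpose_mul_self_mul_mul_transpose_eq hp1]
  have hrange : Y = A *ᵥ ((Apᵀ * Ap) *ᵥ w) := by
    rw [hY, mulVec_mulVec, ← Matrix.mul_assoc, ← hAsymm, ← transpose_mul, hp4, hp2]
  have hfixed : (1 - μ • A) *ᵥ Y + μ • w = Y := by
    rw [sub_mulVec, one_mulVec, smul_mulVec, hsol, sub_add_cancel]
  have hμev : ∀ i, μ * hA.1.eigenvalues i < 2 := fun i =>
    calc μ * hA.1.eigenvalues i ≤ μ * lmax := by gcongr; exact hA.1.eigenvalues_le hmax i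
      _ < 2 := (lt_div_iff₀ hlmax_pos).1 hμ2
  have herr : Tendsto (fun k => (1 - μ • A) ^ k *ᵥ Y) atTop (𝓝 0) := by
    have hcont : Continuous fun M : Matrix (Fin m) (Fin m) ℝ => M *ᵥ ((Apᵀ * Ap) *ᵥ w) :=
      continuous_id.matrix_mulVec continuous_const
    simpa only [hrange, mulVec_mulVec, Matrix.mul_assoc, Function.comp_def, Matrix.zero_mul,
      zero_mulVec] using
      (hcont.tendsto 0).comp (hA.tendsto_one_sub_smul_pow_mul_nhds_zero hμ0 hμev)
  refine ⟨?_, hsol, fun X hX => Real.sqrt_le_sqrt ?_⟩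
  · simpa [funext (iterate_eq_sub_pow_mulVec hfixed hC0 hC)] using tendsto_const_nhds.sub herr
  · have hYX : Y = (Ap * A) *ᵥ X := by rw [hY, ← hX, mulVec_mulVec]
    have hidem : Ap * A * (Ap * A) = Ap * A := by rw [← Matrix.mul_assoc, hp2]
    simpa only [hYX, dotProduct, sq] using dotProduct_mulVec_self_le hp4 hidem X

/-- Let `A = Bᵀ B`, `0 < μ < 2 / λ_max(A)`, and `Ap` the Moore–Penrose pseudoinverse of
`A`. If `C 0 = 0`, then the iteration `C (α+1) = (I - μ A) (C α) + μ Bᵀ b` converges to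
`Ap Bᵀ b`, which is the solution of `A X = Bᵀ b` of minimum Euclidean norm. -/
theorem ipia_converges_to_min_norm_solution
    (n m : ℕ) (B : Matrix (Fin n) (Fin m) ℝ) (b : Fin n → ℝ)
    (A Ap : Matrix (Fin m) (Fin m) ℝ) (hAdef : A = Bᵀ * B)
    (hp1 : A * Ap * A = A) (hp2 : Ap * A * Ap = Ap)
    (hp3 : (A * Ap)ᵀ = A * Ap) (hp4 : (Ap * A)ᵀ = Ap * A)
    (μ lmax : ℝ) (hlmax_pos : 0 < lmax)
    (hmax_eig : ∃ v : Fin m → ℝ, v ≠ 0 ∧ A.mulVec v = lmax • v)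
    (hmax : ∀ (l : ℝ) (v : Fin m → ℝ), v ≠ 0 → A.mulVec v = l • v → l ≤ lmax)
    (hμ0 : 0 < μ) (hμ2 : μ < 2 / lmax)
    (C : ℕ → (Fin m → ℝ)) (hC0 : C 0 = 0)
    (hC : ∀ α : ℕ, C (α + 1) = (1 - μ • A).mulVec (C α) + μ • Bᵀ.mulVec b) :
    Filter.Tendsto C Filter.atTop (nhds (Ap.mulVec (Bᵀ.mulVec b))) ∧
    A.mulVec (Ap.mulVec (Bᵀ.mulVec b)) = Bᵀ.mulVec b ∧
    (∀ X : Fin m → ℝ, A.mulVec X = Bᵀ.mulVec b →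
      Real.sqrt (∑ i, (Ap.mulVec (Bᵀ.mulVec b)) i ^ 2) ≤ Real.sqrt (∑ i, X i ^ 2)) :=
  ipia_converges_to_min_norm_solution_general n m B b A Ap hAdef hp1 hp2 hp4 μ lmax hlmax_pos hmax
    hμ0 hμ2 C hC0 hC
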